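/- arXiv:2309.14866 — 4 statements merged into one kernel-verified Lean document; each statement's English description precedes it below -/
import Mathlib

section
/- Let θ = π/7, R = 1/(2 sin θ), and let P_j = (−R sin(2(j−1)θ), R cos(2(j−1)θ)) for j = 1, …, 7 be the vertices of the regular heptagon with unit side length. If a point q ∈ ℝ² is collinear with P_3 and P_5 and also collinear with P_4 and P_7 (i.e., q is the intersection of the chords P_3P_5 and P_4P_7), then the distance from P_4 to q equals 1 − 1/(2 cos(π/7)). -/
open Real

/-- The `j`-th vertex of the regular `n`-gon with unit side length. -/
noncomputable def ngonVertex (n : ℕ) (j : ℕ) : EuclideanSpace ℝ (Fin 2) :=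
  (WithLp.equiv 2 (Fin 2 → ℝ)).symm
    ![-(1 / (2 * Real.sin (π / n))) * Real.sin (2 * ((j : ℝ) - 1) * (π / n)),
      (1 / (2 * Real.sin (π / n))) * Real.cos (2 * ((j : ℝ) - 1) * (π / n))]

lemma cross_of_collinear {a b q : EuclideanSpace ℝ (Fin 2)}
    (h : Collinear ℝ ({a,b,q} : Set (EuclideanSpace ℝ (Fin 2)))) :
    (b 0 - a 0)*(q 1 - a 1) = (b 1 - a 1)*(q 0 - a 0) := by
  obtain ⟨v, hv⟩ := (collinear_iff_of_mem (show a ∈ ({a,b,q}:Set _) by simp)).1 h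
  obtain ⟨rb, hb⟩ := hv b (by simp)
  obtain ⟨rq, hq⟩ := hv q (by simp)
  have hb0 : b 0 = rb * v 0 + a 0 := by rw [hb]; rfl
  have hb1 : b 1 = rb * v 1 + a 1 := by rw [hb]; rfl
  have hq0 : q 0 = rq * v 0 + a 0 := by rw [hq]; rfl
  have hq1 : q 1 = rq * v 1 + a 1 := by rw [hq]; rfl
  rw [hb0, hb1, hq0, hq1]; ring

set_option maxHeartbeats 2000000 in
/-- In the regular heptagon with unit side length, the intersection point `q` of the
chords `P₃P₅` and `P₄P₇` satisfies `dist P₄ q = 1 − 1/(2 cos (π/7))`. -/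
theorem heptagon_chord_intersection_dist (q : EuclideanSpace ℝ (Fin 2))
    (h35 : Collinear ℝ ({ngonVertex 7 3, ngonVertex 7 5, q} : Set (EuclideanSpace ℝ (Fin 2))))
    (h47 : Collinear ℝ ({ngonVertex 7 4, ngonVertex 7 7, q} : Set (EuclideanSpace ℝ (Fin 2)))) :
    dist (ngonVertex 7 4) q = 1 - 1 / (2 * Real.cos (π / 7)) := by
  set s := sin (π/7) with hs
  set c := cos (π/7) with hc
  have hspos : 0 < s := by rw [hs]; apply Real.sin_pos_of_pos_of_lt_pi <;> nlinarith [pi_pos]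
  have hcpos : 0 < c := by
    rw [hc]; apply Real.cos_pos_of_mem_Ioo; constructor <;> nlinarith [pi_pos]
  have hsne : s ≠ 0 := ne_of_gt hspos
  have hcne : c ≠ 0 := ne_of_gt hcpos
  have hP : s^2 + c^2 = 1 := by rw [hs, hc]; exact sin_sq_add_cos_sq _
  have hM : 8*c^3 - 4*c^2 - 4*c + 1 = 0 := by
    have h1 : cos (4*(π/7)) = -(cos (3*(π/7))) := by
      rw [show (4:ℝ)*(π/7) = π - 3*(π/7) by ring, Real.cos_pi_sub]
    have h2 : cos (4*(π/7)) = 2*(2*c^2-1)^2 - 1 := by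
      rw [show (4:ℝ)*(π/7) = 2*(2*(π/7)) by ring, Real.cos_two_mul, Real.cos_two_mul, hc]
    have h3 : cos (3*(π/7)) = 4*c^3 - 3*c := by rw [Real.cos_three_mul, hc]
    have key : (c+1) * (8*c^3 - 4*c^2 - 4*c + 1) = 0 := by nlinarith [h1, h2, h3]
    rcases mul_eq_zero.1 key with h | h
    · linarith
    · exact h
  have hchalf : 1/2 < c := by
    rw [hc, show (1:ℝ)/2 = cos (π/3) by rw [Real.cos_pi_div_three]]
    apply Real.cos_lt_cos_of_nonneg_of_le_pi <;> nlinarith [pi_pos]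
  -- coordinates of the vertices
  have v30 : ngonVertex 7 3 0 = -(1/(2*s)) * (s*(4*c^2-1)) := by
    show -(1 / (2 * Real.sin (π / (7:ℕ)))) * Real.sin (2 * (((3:ℕ):ℝ) - 1) * (π / (7:ℕ))) = _
    rw [show 2 * (((3:ℕ):ℝ) - 1) * (π / ((7:ℕ):ℝ)) = π - 3*(π/7) by push_cast; ring,
      show (π / ((7:ℕ):ℝ)) = π/7 by norm_num,
      Real.sin_pi_sub, Real.sin_three_mul, ← hs]
    linear_combination (-4*s*(-(1/(2*s))))*hP
  have v31 : ngonVertex 7 3 1 = (1/(2*s)) * (-(c*(4*c^2-3))) := by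
    show (1 / (2 * Real.sin (π / (7:ℕ)))) * Real.cos (2 * (((3:ℕ):ℝ) - 1) * (π / (7:ℕ))) = _
    rw [show 2 * (((3:ℕ):ℝ) - 1) * (π / ((7:ℕ):ℝ)) = π - 3*(π/7) by push_cast; ring,
      show (π / ((7:ℕ):ℝ)) = π/7 by norm_num,
      Real.cos_pi_sub, Real.cos_three_mul, ← hs, ← hc]
    ring
  have v40 : ngonVertex 7 4 0 = -(1/(2*s)) * s := by
    show -(1 / (2 * Real.sin (π / (7:ℕ)))) * Real.sin (2 * (((4:ℕ):ℝ) - 1) * (π / (7:ℕ))) = _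
    rw [show 2 * (((4:ℕ):ℝ) - 1) * (π / ((7:ℕ):ℝ)) = π - π/7 by push_cast; ring,
      show (π / ((7:ℕ):ℝ)) = π/7 by norm_num,
      Real.sin_pi_sub, ← hs]
  have v41 : ngonVertex 7 4 1 = (1/(2*s)) * (-c) := by
    show (1 / (2 * Real.sin (π / (7:ℕ)))) * Real.cos (2 * (((4:ℕ):ℝ) - 1) * (π / (7:ℕ))) = _
    rw [show 2 * (((4:ℕ):ℝ) - 1) * (π / ((7:ℕ):ℝ)) = π - π/7 by push_cast; ring,
      show (π / ((7:ℕ):ℝ)) = π/7 by norm_num,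
      Real.cos_pi_sub, ← hc]
  have v50 : ngonVertex 7 5 0 = -(1/(2*s)) * (-s) := by
    show -(1 / (2 * Real.sin (π / (7:ℕ)))) * Real.sin (2 * (((5:ℕ):ℝ) - 1) * (π / (7:ℕ))) = _
    rw [show 2 * (((5:ℕ):ℝ) - 1) * (π / ((7:ℕ):ℝ)) = π + π/7 by push_cast; ring,
      show (π / ((7:ℕ):ℝ)) = π/7 by norm_num,
      Real.sin_add, Real.sin_pi, Real.cos_pi, ← hs]
    ring
  have v51 : ngonVertex 7 5 1 = (1/(2*s)) * (-c) := by
    show (1 / (2 * Real.sin (π / (7:ℕ)))) * Real.cos (2 * (((5:ℕ):ℝ) - 1) * (π / (7:ℕ))) = _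
    rw [show 2 * (((5:ℕ):ℝ) - 1) * (π / ((7:ℕ):ℝ)) = π + π/7 by push_cast; ring,
      show (π / ((7:ℕ):ℝ)) = π/7 by norm_num,
      Real.cos_add, Real.sin_pi, Real.cos_pi, ← hc]
    ring
  have v70 : ngonVertex 7 7 0 = -(1/(2*s)) * (-(2*s*c)) := by
    show -(1 / (2 * Real.sin (π / (7:ℕ)))) * Real.sin (2 * (((7:ℕ):ℝ) - 1) * (π / (7:ℕ))) = _
    rw [show 2 * (((7:ℕ):ℝ) - 1) * (π / ((7:ℕ):ℝ)) = 2*π - 2*(π/7) by push_cast; ring,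
      show (π / ((7:ℕ):ℝ)) = π/7 by norm_num,
      Real.sin_sub, Real.sin_two_pi, Real.cos_two_pi, Real.sin_two_mul, ← hs, ← hc]
    ring
  have v71 : ngonVertex 7 7 1 = (1/(2*s)) * (2*c^2-1) := by
    show (1 / (2 * Real.sin (π / (7:ℕ)))) * Real.cos (2 * (((7:ℕ):ℝ) - 1) * (π / (7:ℕ))) = _
    rw [show 2 * (((7:ℕ):ℝ) - 1) * (π / ((7:ℕ):ℝ)) = 2*π - 2*(π/7) by push_cast; ring,
      show (π / ((7:ℕ):ℝ)) = π/7 by norm_num,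
      Real.cos_sub, Real.sin_two_pi, Real.cos_two_pi, Real.cos_two_mul, ← hc]
    ring
  -- cross-product equations
  have E1 := cross_of_collinear h35
  rw [v30, v31, v50, v51] at E1
  have E2 := cross_of_collinear h47
  rw [v40, v41, v70, v71] at E2
  field_simp at E1 E2
  -- cleaned linear equations
  have hA : 2*s^2*(q 0) + 2*s*c*(q 1) = 1 - 2*c^2 := by
    have key : (32*s^4*c) * (2*s^2*(q 0) + 2*s*c*(q 1) - (1-2*c^2)) = 0 := by
      linear_combination 8*s^4*E1 + (64*s^4*c*(q 0))*hP
    have h32 : (32*s^4*c) ≠ 0 := by positivity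
    have := (mul_eq_zero.1 key).resolve_left h32
    linarith
  have hB : (2*c^2+c-1)*(q 0) - s*(2*c+1)*(q 1) = 1/2 := by
    have key : (-2*s) * ((2*c^2+c-1)*(q 0) - s*(2*c+1)*(q 1) - 1/2) = 0 := by
      linear_combination s*E2
    have h2s : (-2*s) ≠ 0 := by intro h; nlinarith
    have := (mul_eq_zero.1 key).resolve_left h2s
    linarith
  have hx : (2*s*(c+1)) * q 0 = s*(2*c+1)*(1-2*c^2) + s*c := by
    linear_combination (s*(2*c+1))*hA + (2*s*c)*hB + (-2*s*(2*c+1)*(q 0))*hP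
  have hy : (2*s*(c+1)) * q 1 = (2*c^2+c-1)*(1-2*c^2) - s^2 := by
    linear_combination (2*c^2+c-1)*hA + (-2*s^2)*hB + (-2*s*(2*c+1)*(q 1))*hP
  have hfac : (2*s*(c+1)) ≠ 0 := by positivity
  have hq0 : q 0 = (1-2*c)/(4*c) := by
    apply mul_left_cancel₀ hfac
    rw [hx]; field_simp; linear_combination (-2*(c+1))*hM
  have hq1 : q 1 = (2*c-3)/(4*s) := by
    apply mul_left_cancel₀ hfac
    rw [hy]; field_simp; linear_combination (-2*(c+1))*hM + (-4)*hP
  -- distance computation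
  rw [EuclideanSpace.dist_eq, Fin.sum_univ_two, v40, v41, hq0, hq1]
  have hin : (-(1/(2*s))*s - (1-2*c)/(4*c))^2 + ((1/(2*s))*(-c) - (2*c-3)/(4*s))^2
      = (1 - 1/(2*c))^2 := by
    field_simp
    ring_nf
    linear_combination (16*c-12)*hM + (-64*c^2+64*c-12)*hP
  have hd0 : (0:ℝ) ≤ 1 - 1/(2*c) := by
    have h1 : 1/(2*c) ≤ 1 := by rw [div_le_one (by positivity)]; linarith
    linarith
  simp only [Real.dist_eq, sq_abs]
  rw [hin, Real.sqrt_sq hd0]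
end

section
/- Let θ = π/9, C = cos θ, S = sin θ, R = 1/(2S), and let P_j = (−R sin(2(j−1)θ), R cos(2(j−1)θ)) for j = 1, …, 9 be the vertices of the regular 9-gon with unit side length. Then the point q = (2C/(2C+1), 2S − 1/S + √3) is collinear with P_3 and P_7 and also collinear with P_6 and P_9; that is, q is the intersection point of the chords P_3P_7 and P_6P_9. -/
open Real

/-- Three points in the Euclidean plane are collinear provided the cross product of the
difference vectors vanishes. -/
lemma collinear₃_of_cross (a b q : EuclideanSpace ℝ (Fin 2))
    (h : (q 0 - a 0) * (b 1 - a 1) = (q 1 - a 1) * (b 0 - a 0)) :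
    Collinear ℝ ({a, b, q} : Set (EuclideanSpace ℝ (Fin 2))) := by
  by_cases hba : b = a
  · subst hba
    have hset : ({b, b, q} : Set (EuclideanSpace ℝ (Fin 2))) = {b, q} := by simp
    rw [hset]; exact collinear_pair ℝ b q
  rw [collinear_iff_exists_forall_eq_smul_vadd]
  refine ⟨a, b - a, ?_⟩
  rintro p (rfl | rfl | rfl)
  · exact ⟨0, by simp⟩
  · exact ⟨1, by simp⟩
  · by_cases hb0 : b 0 = a 0
    · have hb1 : b 1 ≠ a 1 := by
        intro hb1
        apply hba
        ext i
        fin_cases i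
        · exact hb0
        · exact hb1
      refine ⟨(p 1 - a 1) / (b 1 - a 1), ?_⟩
      have hq0 : p 0 = a 0 := by
        have h' := h
        rw [hb0, sub_self, mul_zero] at h'
        rcases mul_eq_zero.1 h' with h'' | h''
        · linarith [sub_eq_zero.1 h'']
        · exact absurd (sub_eq_zero.1 h'') hb1
      ext i
      fin_cases i
      · show p 0 = (p 1 - a 1) / (b 1 - a 1) * (b 0 - a 0) + a 0
        rw [hb0, hq0]; ring
      · show p 1 = (p 1 - a 1) / (b 1 - a 1) * (b 1 - a 1) + a 1
        rw [div_mul_cancel₀ _ (sub_ne_zero.2 hb1)]; ring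
    · refine ⟨(p 0 - a 0) / (b 0 - a 0), ?_⟩
      have hb0' : b 0 - a 0 ≠ 0 := sub_ne_zero.2 hb0
      ext i
      fin_cases i
      · show p 0 = (p 0 - a 0) / (b 0 - a 0) * (b 0 - a 0) + a 0
        rw [div_mul_cancel₀ _ hb0']; ring
      · show p 1 = (p 0 - a 0) / (b 0 - a 0) * (b 1 - a 1) + a 1
        rw [div_mul_eq_mul_div, h, mul_div_assoc, div_self hb0', mul_one]
        ring

/-- In the regular 9-gon with unit side length, with `C = cos (π/9)` and `S = sin (π/9)`,
the point `q = (2C/(2C+1), 2S − 1/S + √3)` lies on the chord `P₃P₇` and on the chord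
`P₆P₉`; that is, `q` is their intersection point. -/
theorem ninegon_chord_intersection :
    Collinear ℝ ({ngonVertex 9 3, ngonVertex 9 7,
      (WithLp.equiv 2 (Fin 2 → ℝ)).symm
        ![2 * Real.cos (π / 9) / (2 * Real.cos (π / 9) + 1),
          2 * Real.sin (π / 9) - 1 / Real.sin (π / 9) + Real.sqrt 3]} :
      Set (EuclideanSpace ℝ (Fin 2))) ∧
    Collinear ℝ ({ngonVertex 9 6, ngonVertex 9 9,
      (WithLp.equiv 2 (Fin 2 → ℝ)).symm
        ![2 * Real.cos (π / 9) / (2 * Real.cos (π / 9) + 1),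
          2 * Real.sin (π / 9) - 1 / Real.sin (π / 9) + Real.sqrt 3]} :
      Set (EuclideanSpace ℝ (Fin 2))) := by
  have hspos : 0 < Real.sin (π / 9) :=
    Real.sin_pos_of_pos_of_lt_pi (by positivity) (by linarith [Real.pi_pos])
  have hcpos : 0 < Real.cos (π / 9) :=
    Real.cos_pos_of_mem_Ioo ⟨by linarith [Real.pi_pos], by linarith [Real.pi_pos]⟩
  have h1 : Real.sin (π / 9) ^ 2 + Real.cos (π / 9) ^ 2 = 1 := Real.sin_sq_add_cos_sq _
  have h2 : 8 * Real.cos (π / 9) ^ 3 - 6 * Real.cos (π / 9) = 1 := by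
    have h := Real.cos_three_mul (π / 9)
    rw [show (3:ℝ) * (π / 9) = π / 3 by ring, Real.cos_pi_div_three] at h
    linarith
  have h3 : Real.sqrt 3 = 6 * Real.sin (π / 9) - 8 * Real.sin (π / 9) ^ 3 := by
    have h := Real.sin_three_mul (π / 9)
    rw [show (3:ℝ) * (π / 9) = π / 3 by ring, Real.sin_pi_div_three] at h
    linarith
  constructor
  · -- chord P₃P₇
    apply collinear₃_of_cross
    simp only [ngonVertex, WithLp.equiv_symm_apply, PiLp.toLp_apply, Matrix.cons_val_zero, Matrix.cons_val_one,
      Matrix.head_cons]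
    push_cast
    norm_num
    have hs4 : Real.sin (4 * (π / 9)) =
        2 * (2 * Real.sin (π / 9) * Real.cos (π / 9)) * (2 * Real.cos (π / 9) ^ 2 - 1) := by
      rw [show (4:ℝ) * (π / 9) = 2 * (2 * (π / 9)) by ring, Real.sin_two_mul, Real.sin_two_mul,
        Real.cos_two_mul]
    have hc4 : Real.cos (4 * (π / 9)) = 2 * (2 * Real.cos (π / 9) ^ 2 - 1) ^ 2 - 1 := by
      rw [show (4:ℝ) * (π / 9) = 2 * (2 * (π / 9)) by ring, Real.cos_two_mul, Real.cos_two_mul]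
    have hs12 : Real.sin (12 * (π / 9)) = -(Real.sqrt 3 / 2) := by
      rw [show (12:ℝ) * (π / 9) = π + π / 3 by ring, Real.sin_add]
      simp [Real.sin_pi_div_three]
    have hc12 : Real.cos (12 * (π / 9)) = -(1 / 2) := by
      rw [show (12:ℝ) * (π / 9) = π + π / 3 by ring, Real.cos_add]
      simp [Real.cos_pi_div_three]
    rw [hs4, hc4, hs12, hc12, h3]
    set s := Real.sin (π / 9)
    set c := Real.cos (π / 9)
    have hs0 : s ≠ 0 := ne_of_gt hspos
    have hden : 2 * c + 1 ≠ 0 := by positivity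
    field_simp
    linear_combination
      ((-24) + (-48) * c^1 + (96) * c^2 + (320) * c^3 + (64) * c^4 + (-640) * c^5 + (-512) * c^6 +
        (96) * s^2 + (64) * s^2 * c^1 + (-128) * s^2 * c^2 + (512) * s^2 * c^3 + (512) * s^2 * c^4 +
        (-128) * s^4 + (-256) * s^4 * c^1) * h1
      + ((6) + (-48) * c^2 + (-24) * c^3 + (80) * c^4 + (64) * c^5) * h2
  · -- chord P₆P₉
    apply collinear₃_of_cross
    simp only [ngonVertex, WithLp.equiv_symm_apply, PiLp.toLp_apply, Matrix.cons_val_zero, Matrix.cons_val_one,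
      Matrix.head_cons]
    push_cast
    norm_num
    have hs10 : Real.sin (10 * (π / 9)) = -Real.sin (π / 9) := by
      rw [show (10:ℝ) * (π / 9) = π + π / 9 by ring, Real.sin_add]; simp
    have hc10 : Real.cos (10 * (π / 9)) = -Real.cos (π / 9) := by
      rw [show (10:ℝ) * (π / 9) = π + π / 9 by ring, Real.cos_add]; simp
    have hs16 : Real.sin (16 * (π / 9)) = -(2 * (Real.sin (π / 9) * Real.cos (π / 9))) := by
      rw [show (16:ℝ) * (π / 9) = 2 * π - 2 * (π / 9) by ring, Real.sin_sub, Real.sin_two_pi,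
        Real.cos_two_pi, Real.sin_two_mul]
      ring
    have hc16 : Real.cos (16 * (π / 9)) = 2 * Real.cos (π / 9) ^ 2 - 1 := by
      rw [show (16:ℝ) * (π / 9) = 2 * π - 2 * (π / 9) by ring, Real.cos_sub, Real.sin_two_pi,
        Real.cos_two_pi, Real.cos_two_mul]
      ring
    rw [hs10, hc10, hs16, hc16, h3]
    set s := Real.sin (π / 9)
    set c := Real.cos (π / 9)
    have hs0 : s ≠ 0 := ne_of_gt hspos
    have hden : 2 * c + 1 ≠ 0 := by positivity
    field_simp
    linear_combination
      ((16) * c^2 + (-64) * c^4 + (-16) * s^2 + (64) * s^2 * c^2) * h1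
      + ((1) + (-4) * c^1 + (8) * c^3) * h2
end

section
/- Let θ = π/9, C = cos θ, S = sin θ, R = 1/(2S), and let P_j = (−R sin(2(j−1)θ), R cos(2(j−1)θ)) for j = 1, …, 9 be the vertices of the regular 9-gon with unit side length. For the point q = (2C/(2C+1), 2S − 1/S + √3) (the intersection of the chords P_3P_7 and P_6P_9), the distance from q to P_7 equals 2C/(2C+1) and the distance from q to P_9 equals 1 + 2C/(2C+1). -/
open Real

theorem ninegon_aux1 (S C T : ℝ) (hS : S ≠ 0) (hu : 2*C + 1 ≠ 0)
    (h1 : S^2 + C^2 = 1) (h3 : 8*C^3 - 6*C = 1) (hT : T = 6*S - 8*S^3) :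
    (2*C/(2*C+1) - T/(4*S))^2 + (2*S - 1/S + T + 1/(4*S))^2 = (2*C/(2*C+1))^2 := by
  subst hT; field_simp; ring_nf
  linear_combination ((4) + (48)*C^1 + (-144)*C^2 + (-1024)*C^3 + (-64)*C^4 + (4352)*C^5 + (3328)*C^6 + (-4096)*C^7 + (-4096)*C^8 + (160)*S^2 + (768)*S^2*C^1 + (832)*S^2*C^2 + (-256)*S^2*C^3 + (768)*S^2*C^4 + (4096)*S^2*C^5 + (4096)*S^2*C^6 + (-960)*S^4 + (-3840)*S^4*C^1 + (-4864)*S^4*C^2 + (-4096)*S^4*C^3 + (-4096)*S^4*C^4 + (1024)*S^6 + (4096)*S^6*C^1 + (4096)*S^6*C^2) * h1 + ((-13) + (-6)*C^1 + (148)*C^2 + (80)*C^3 + (-608)*C^4 + (-544)*C^5 + (512)*C^6 + (512)*C^7) * h3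

theorem ninegon_aux2 (S C T : ℝ) (hS : S ≠ 0) (hu : 2*C + 1 ≠ 0)
    (h1 : S^2 + C^2 = 1) (h3 : 8*C^3 - 6*C = 1) (hT : T = 6*S - 8*S^3) :
    (2*C/(2*C+1) - C)^2 + (2*S - 1/S + T - (2*C^2-1)/(2*S))^2 = (1 + 2*C/(2*C+1))^2 := by
  subst hT; field_simp; ring_nf
  linear_combination ((-4) + (-32)*C^1 + (-92)*C^2 + (-144)*C^3 + (80)*C^4 + (768)*C^5 + (512)*C^6 + (-1024)*C^7 + (-1024)*C^8 + (32)*S^2 + (128)*S^2*C^1 + (192)*S^2*C^2 + (256)*S^2*C^3 + (512)*S^2*C^4 + (1024)*S^2*C^5 + (1024)*S^2*C^6 + (-256)*S^4 + (-1024)*S^4*C^1 + (-1280)*S^4*C^2 + (-1024)*S^4*C^3 + (-1024)*S^4*C^4 + (256)*S^6 + (1024)*S^6*C^1 + (1024)*S^6*C^2) * h1 + ((3) + (10)*C^1 + (20)*C^2 + (-112)*C^4 + (-96)*C^5 + (128)*C^6 + (128)*C^7) * h3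

/-- In the regular 9-gon with unit side length, with `C = cos (π/9)` and `S = sin (π/9)`,
the point `q = (2C/(2C+1), 2S − 1/S + √3)` (the intersection of the chords `P₃P₇` and
`P₆P₉`) satisfies `dist q P₇ = 2C/(2C+1)` and `dist q P₉ = 1 + 2C/(2C+1)`. -/
theorem ninegon_chord_intersection_dists :
    dist ((WithLp.equiv 2 (Fin 2 → ℝ)).symm
        ![2 * Real.cos (π / 9) / (2 * Real.cos (π / 9) + 1),
          2 * Real.sin (π / 9) - 1 / Real.sin (π / 9) + Real.sqrt 3] :
        EuclideanSpace ℝ (Fin 2)) (ngonVertex 9 7) =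
      2 * Real.cos (π / 9) / (2 * Real.cos (π / 9) + 1) ∧
    dist ((WithLp.equiv 2 (Fin 2 → ℝ)).symm
        ![2 * Real.cos (π / 9) / (2 * Real.cos (π / 9) + 1),
          2 * Real.sin (π / 9) - 1 / Real.sin (π / 9) + Real.sqrt 3] :
        EuclideanSpace ℝ (Fin 2)) (ngonVertex 9 9) =
      1 + 2 * Real.cos (π / 9) / (2 * Real.cos (π / 9) + 1) := by
  have hπ := Real.pi_pos
  have hSpos : 0 < Real.sin (π / 9) :=
    Real.sin_pos_of_pos_of_lt_pi (by linarith) (by linarith)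
  have hCpos : 0 < Real.cos (π / 9) :=
    Real.cos_pos_of_mem_Ioo ⟨by linarith, by linarith⟩
  set S := Real.sin (π / 9) with hSdef
  set C := Real.cos (π / 9) with hCdef
  have hS : S ≠ 0 := ne_of_gt hSpos
  have hu : 2 * C + 1 ≠ 0 := by positivity
  have h1 : S ^ 2 + C ^ 2 = 1 := Real.sin_sq_add_cos_sq _
  have h3 : 8 * C ^ 3 - 6 * C = 1 := by
    have h := Real.cos_three_mul (π / 9)
    rw [show 3 * (π / 9) = π / 3 by ring, Real.cos_pi_div_three] at h
    rw [← hCdef] at h; linarith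
  have hT : Real.sqrt 3 = 6 * S - 8 * S ^ 3 := by
    have h := Real.sin_three_mul (π / 9)
    rw [show 3 * (π / 9) = π / 3 by ring, Real.sin_pi_div_three] at h
    rw [← hSdef] at h; linarith
  have e7s : Real.sin (2 * (((7 : ℕ) : ℝ) - 1) * (π / ((9 : ℕ) : ℝ))) = -(Real.sqrt 3 / 2) := by
    rw [show 2 * (((7 : ℕ) : ℝ) - 1) * (π / ((9 : ℕ) : ℝ)) = π + π / 3 by push_cast; ring,
      Real.sin_add, Real.sin_pi, Real.cos_pi, Real.sin_pi_div_three]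
    ring
  have e7c : Real.cos (2 * (((7 : ℕ) : ℝ) - 1) * (π / ((9 : ℕ) : ℝ))) = -(1 / 2) := by
    rw [show 2 * (((7 : ℕ) : ℝ) - 1) * (π / ((9 : ℕ) : ℝ)) = π + π / 3 by push_cast; ring,
      Real.cos_add, Real.sin_pi, Real.cos_pi, Real.cos_pi_div_three]
    ring
  have e9s : Real.sin (2 * (((9 : ℕ) : ℝ) - 1) * (π / ((9 : ℕ) : ℝ))) = -(2 * S * C) := by
    rw [show 2 * (((9 : ℕ) : ℝ) - 1) * (π / ((9 : ℕ) : ℝ)) = 2 * π - 2 * (π / 9) by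
        push_cast; ring,
      Real.sin_sub, Real.sin_two_pi, Real.cos_two_pi, Real.sin_two_mul]
    rw [← hSdef, ← hCdef]; ring
  have e9c : Real.cos (2 * (((9 : ℕ) : ℝ) - 1) * (π / ((9 : ℕ) : ℝ))) = 2 * C ^ 2 - 1 := by
    rw [show 2 * (((9 : ℕ) : ℝ) - 1) * (π / ((9 : ℕ) : ℝ)) = 2 * π - 2 * (π / 9) by
        push_cast; ring,
      Real.cos_sub, Real.sin_two_pi, Real.cos_two_pi, Real.cos_two_mul]
    rw [← hCdef]; ring
  have hn9 : Real.sin (π / ((9 : ℕ) : ℝ)) = S := by norm_num [hSdef]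
  constructor
  · rw [EuclideanSpace.dist_eq]
    rw [show √(∑ i, dist (((WithLp.equiv 2 (Fin 2 → ℝ)).symm
        ![2 * C / (2 * C + 1), 2 * S - 1 / S + √3] : EuclideanSpace ℝ (Fin 2)) i)
          (ngonVertex 9 7 i) ^ 2) = √((2*C/(2*C+1) - √3/(4*S))^2 + (2*S - 1/S + √3 + 1/(4*S))^2) by
      congr 1
      simp only [ngonVertex, Fin.sum_univ_two, WithLp.equiv_symm_apply, PiLp.toLp_apply,
        Matrix.cons_val_zero, Matrix.cons_val_one, Matrix.head_cons, hn9, e7s, e7c, Real.dist_eq, sq_abs]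
      field_simp
      try ring]
    rw [ninegon_aux1 S C (√3) hS hu h1 h3 hT]
    exact Real.sqrt_sq (by positivity)
  · rw [EuclideanSpace.dist_eq]
    rw [show √(∑ i, dist (((WithLp.equiv 2 (Fin 2 → ℝ)).symm
        ![2 * C / (2 * C + 1), 2 * S - 1 / S + √3] : EuclideanSpace ℝ (Fin 2)) i)
          (ngonVertex 9 9 i) ^ 2) = √((2*C/(2*C+1) - C)^2 + (2*S - 1/S + √3 - (2*C^2-1)/(2*S))^2) by
      congr 1
      simp only [ngonVertex, Fin.sum_univ_two, WithLp.equiv_symm_apply, PiLp.toLp_apply,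
        Matrix.cons_val_zero, Matrix.cons_val_one, Matrix.head_cons, hn9, e9s, e9c, Real.dist_eq, sq_abs]
      field_simp
      try ring]
    rw [ninegon_aux2 S C (√3) hS hu h1 h3 hT]
    exact Real.sqrt_sq (by positivity)
end

section
/- Let θ = π/11, R = 1/(2 sin θ), and let P_j = (−R sin(2(j−1)θ), R cos(2(j−1)θ)) for j = 1, …, 11 be the vertices of the regular 11-gon with unit side length. Then the point q = (0, −sin(2θ)/(cos θ + cos 2θ)) is collinear with P_3 and P_8 and also collinear with P_5 and P_10 (so q is the intersection of the chords P_3P_8 and P_5P_10, lying at distance sin(2θ)/(cos θ + cos 2θ) below the center), and moreover dist(P_3, q) = 2 cos(π/11) and dist(P_10, q) = 2 cos(π/11). -/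
open Real

lemma collinear_triple (p₁ p₂ p₃ : EuclideanSpace ℝ (Fin 2)) (t : ℝ)
    (h : p₃ = t • (p₂ - p₁) + p₁) : Collinear ℝ ({p₁, p₂, p₃} : Set (EuclideanSpace ℝ (Fin 2))) := by
  rw [collinear_iff_exists_forall_eq_smul_vadd]
  refine ⟨p₁, p₂ - p₁, ?_⟩
  rintro p (rfl | rfl | rfl)
  · exact ⟨0, by simp⟩
  · exact ⟨1, by simp⟩
  · exact ⟨t, by simpa using h⟩

set_option maxHeartbeats 1000000 in
/-- In the regular 11-gon with unit side length (with `θ = π/11`), the point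
`q = (0, −sin 2θ/(cos θ + cos 2θ))` lies on the chord `P₃P₈` and on the chord `P₅P₁₀`
(so it is their intersection, at distance `sin 2θ/(cos θ + cos 2θ)` below the center),
and `dist P₃ q = 2 cos (π/11)` and `dist P₁₀ q = 2 cos (π/11)`. -/
theorem elevengon_chord_intersection :
    Collinear ℝ ({ngonVertex 11 3, ngonVertex 11 8,
      (WithLp.equiv 2 (Fin 2 → ℝ)).symm
        ![0, -(Real.sin (2 * (π / 11)) / (Real.cos (π / 11) + Real.cos (2 * (π / 11))))]} :
      Set (EuclideanSpace ℝ (Fin 2))) ∧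
    Collinear ℝ ({ngonVertex 11 5, ngonVertex 11 10,
      (WithLp.equiv 2 (Fin 2 → ℝ)).symm
        ![0, -(Real.sin (2 * (π / 11)) / (Real.cos (π / 11) + Real.cos (2 * (π / 11))))]} :
      Set (EuclideanSpace ℝ (Fin 2))) ∧
    dist (ngonVertex 11 3)
      ((WithLp.equiv 2 (Fin 2 → ℝ)).symm
        ![0, -(Real.sin (2 * (π / 11)) / (Real.cos (π / 11) + Real.cos (2 * (π / 11))))] :
        EuclideanSpace ℝ (Fin 2)) = 2 * Real.cos (π / 11) ∧
    dist (ngonVertex 11 10)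
      ((WithLp.equiv 2 (Fin 2 → ℝ)).symm
        ![0, -(Real.sin (2 * (π / 11)) / (Real.cos (π / 11) + Real.cos (2 * (π / 11))))] :
        EuclideanSpace ℝ (Fin 2)) = 2 * Real.cos (π / 11) := by
  have hπ := Real.pi_pos
  set s := Real.sin (π/11) with hs_def
  set c := Real.cos (π/11) with hc_def
  have hs : 0 < s := Real.sin_pos_of_pos_of_lt_pi (by linarith) (by linarith)
  have hc : 0 < c := Real.cos_pos_of_mem_Ioo ⟨by linarith, by linarith⟩
  have hpyth : s^2 + c^2 = 1 := Real.sin_sq_add_cos_sq _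
  have e2s : Real.sin (2*(π/11)) = 2*s*c := by rw [Real.sin_two_mul]
  have e2c : Real.cos (2*(π/11)) = 2*c^2-1 := by rw [Real.cos_two_mul]
  have e3s : Real.sin (3*(π/11)) = 3*s-4*s^3 := by rw [Real.sin_three_mul]
  have e3c : Real.cos (3*(π/11)) = 4*c^3-3*c := by rw [Real.cos_three_mul]
  have e4s : Real.sin (4*(π/11)) = 4*s*c*(2*c^2-1) := by
    rw [show (4:ℝ)*(π/11) = 2*(2*(π/11)) by ring, Real.sin_two_mul, e2s, e2c]; ring
  have e4c : Real.cos (4*(π/11)) = 2*(2*c^2-1)^2-1 := by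
    rw [show (4:ℝ)*(π/11) = 2*(2*(π/11)) by ring, Real.cos_two_mul, e2c]
  have e14s : Real.sin (14*(π/11)) = -(3*s-4*s^3) := by
    rw [show (14:ℝ)*(π/11) = π + 3*(π/11) by ring, Real.sin_add, Real.sin_pi, Real.cos_pi, e3s]; ring
  have e14c : Real.cos (14*(π/11)) = -(4*c^3-3*c) := by
    rw [show (14:ℝ)*(π/11) = π + 3*(π/11) by ring, Real.cos_add, Real.sin_pi, Real.cos_pi, e3c]; ring
  have e8s : Real.sin (8*(π/11)) = 3*s-4*s^3 := by
    rw [show (8:ℝ)*(π/11) = π - 3*(π/11) by ring, Real.sin_pi_sub, e3s]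
  have e8c : Real.cos (8*(π/11)) = -(4*c^3-3*c) := by
    rw [show (8:ℝ)*(π/11) = π - 3*(π/11) by ring, Real.cos_pi_sub, e3c]
  have e18s : Real.sin (18*(π/11)) = -(4*s*c*(2*c^2-1)) := by
    rw [show (18:ℝ)*(π/11) = π + (π - 4*(π/11)) by ring, Real.sin_add, Real.sin_pi, Real.cos_pi,
      Real.sin_pi_sub, e4s]; ring
  have e18c : Real.cos (18*(π/11)) = 2*(2*c^2-1)^2-1 := by
    rw [show (18:ℝ)*(π/11) = π + (π - 4*(π/11)) by ring, Real.cos_add, Real.sin_pi, Real.cos_pi,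
      Real.cos_pi_sub, e4c]; ring
  have h11 : (2*c^2-1)*(4*c^3-3*c) - (2*s*c)*(3*s-4*s^3) = -(2*(4*c^3-3*c)^2-1) := by
    have h5 : Real.cos (5*(π/11)) = -Real.cos (6*(π/11)) := by
      rw [show (5:ℝ)*(π/11) = π - 6*(π/11) by ring, Real.cos_pi_sub]
    rw [show (5:ℝ)*(π/11) = 2*(π/11) + 3*(π/11) by ring, Real.cos_add, e2s, e2c, e3s, e3c,
      show (6:ℝ)*(π/11) = 2*(3*(π/11)) by ring, Real.cos_two_mul, e3c] at h5
    linarith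
  have hd : 0 < c + (2*c^2-1) := by
    rw [← e2c, hc_def]
    have : 0 < Real.cos (2*(π/11)) := Real.cos_pos_of_mem_Ioo ⟨by linarith, by linarith⟩
    linarith
  have hq : 0 < (3*s-4*s^3) + 4*s*c*(2*c^2-1) := by
    rw [← e3s, ← e4s]
    have h3 : 0 < Real.sin (3*(π/11)) := Real.sin_pos_of_pos_of_lt_pi (by linarith) (by linarith)
    have h4 : 0 < Real.sin (4*(π/11)) := Real.sin_pos_of_pos_of_lt_pi (by linarith) (by linarith)
    linarith
  have v3 : ngonVertex 11 3 = (WithLp.equiv 2 (Fin 2 → ℝ)).symm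
      ![-(1/(2*s)) * (4*s*c*(2*c^2-1)), (1/(2*s)) * (2*(2*c^2-1)^2-1)] := by
    unfold ngonVertex
    norm_num
    rw [e4s, e4c, hs_def]
    constructor <;> ring
  have v8 : ngonVertex 11 8 = (WithLp.equiv 2 (Fin 2 → ℝ)).symm
      ![(1/(2*s)) * (3*s-4*s^3), -((1/(2*s)) * (4*c^3-3*c))] := by
    unfold ngonVertex
    norm_num
    rw [e14s, e14c, hs_def]
    constructor <;> ring
  have v5 : ngonVertex 11 5 = (WithLp.equiv 2 (Fin 2 → ℝ)).symm
      ![-((1/(2*s)) * (3*s-4*s^3)), -((1/(2*s)) * (4*c^3-3*c))] := by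
    unfold ngonVertex
    norm_num
    rw [e8s, e8c, hs_def]
    constructor <;> ring
  have v10 : ngonVertex 11 10 = (WithLp.equiv 2 (Fin 2 → ℝ)).symm
      ![(1/(2*s)) * (4*s*c*(2*c^2-1)), (1/(2*s)) * (2*(2*c^2-1)^2-1)] := by
    unfold ngonVertex
    norm_num
    rw [e18s, e18c, hs_def]
    constructor <;> ring
  rw [e2s, e2c]
  have h1 : c + (2*c^2-1) ≠ 0 := ne_of_gt hd
  have h2 : (3*s-4*s^3) + 4*s*c*(2*c^2-1) ≠ 0 := ne_of_gt hq
  have hs' : s ≠ 0 := ne_of_gt hs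
  have h2a : 3 - 4 * s ^ 2 + 4 * c * (c ^ 2 * 2 - 1) ≠ 0 := fun h => h2 (by linear_combination s*h)
  have h2b : 3 - s ^ 2 * 4 + c * (2 * c ^ 2 - 1) * 4 ≠ 0 := fun h => h2 (by linear_combination s*h)
  have h2c : 3 - s ^ 2 * 4 + 4 * c * (c ^ 2 * 2 - 1) ≠ 0 := fun h => h2 (by linear_combination s*h)
  refine ⟨?_, ?_, ?_, ?_⟩
  · rw [v3, v8]
    apply collinear_triple _ _ _ ((4*s*c*(2*c^2-1))/((3*s-4*s^3) + 4*s*c*(2*c^2-1)))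
    ext i
    fin_cases i <;>
      simp only [WithLp.equiv_symm_apply, PiLp.toLp_apply, PiLp.add_apply, PiLp.sub_apply, PiLp.smul_apply,
        Matrix.cons_val_zero, Matrix.cons_val_one, Matrix.head_cons, smul_eq_mul, Fin.zero_eta, Fin.mk_one]
    · field_simp
      try ring
    · field_simp
      linear_combination (-4 + 6*c + 56*c^2 - 40*c^3 - 128*c^4 + 32*c^5 + 64*c^6 + 8*s^2*c)*hpyth + h11
  · rw [v5, v10]
    apply collinear_triple _ _ _ ((3*s-4*s^3)/((3*s-4*s^3) + 4*s*c*(2*c^2-1)))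
    ext i
    fin_cases i <;>
      simp only [WithLp.equiv_symm_apply, PiLp.toLp_apply, PiLp.add_apply, PiLp.sub_apply, PiLp.smul_apply,
        Matrix.cons_val_zero, Matrix.cons_val_one, Matrix.head_cons, smul_eq_mul, Fin.zero_eta, Fin.mk_one]
    · field_simp
      try ring
    · field_simp
      linear_combination (-4 + 6*c + 56*c^2 - 40*c^3 - 128*c^4 + 32*c^5 + 64*c^6 + 8*s^2*c)*hpyth + h11
  · rw [v3, EuclideanSpace.dist_eq]
    rw [show (2:ℝ)*c = Real.sqrt ((2*c)^2) from (Real.sqrt_sq (by positivity)).symm]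
    congr 1
    rw [Fin.sum_univ_two]
    simp only [WithLp.equiv_symm_apply, PiLp.toLp_apply, Matrix.cons_val_zero, Matrix.cons_val_one, Matrix.head_cons, Real.dist_eq, sq_abs]
    field_simp
    linear_combination (-6*c + 14*c^2 + 68*c^3 - 96*c^4 - 48*c^5 + 288*c^6 - 256*c^7 - 448*c^8 + 256*c^9 + 256*c^10 + 8*s^2*c - 24*s^2*c^2 - 16*s^2*c^3 + 32*s^2*c^4)*hpyth + (-1 + 5*c + 2*c^2 - 4*c^3)*h11
  · rw [v10, EuclideanSpace.dist_eq]
    rw [show (2:ℝ)*c = Real.sqrt ((2*c)^2) from (Real.sqrt_sq (by positivity)).symm]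
    congr 1
    rw [Fin.sum_univ_two]
    simp only [WithLp.equiv_symm_apply, PiLp.toLp_apply, Matrix.cons_val_zero, Matrix.cons_val_one, Matrix.head_cons, Real.dist_eq, sq_abs]
    field_simp
    linear_combination (-6*c + 14*c^2 + 68*c^3 - 96*c^4 - 48*c^5 + 288*c^6 - 256*c^7 - 448*c^8 + 256*c^9 + 256*c^10 + 8*s^2*c - 24*s^2*c^2 - 16*s^2*c^3 + 32*s^2*c^4)*hpyth + (-1 + 5*c + 2*c^2 - 4*c^3)*h11
end
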